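/- Let (x_n) be a sequence of positive semidefinite n×n complex matrices, and suppose x_n = a_n b_n with matrices a_n, b_n. Then ‖∑_{n=1}^N x_n‖₂ ≤ ‖∑_{n=1}^N a_n a_n*‖₂^{1/2} · ‖∑_{n=1}^N b_n* b_n‖₂^{1/2} in Frobenius norm; moreover taking a_n = b_n = x_n^{1/2} achieves equality, so the infimum of the right-hand side over all factorizations x_n = a_n b_n equals ‖∑_{n=1}^N x_n‖₂. -/

import Mathlib

/-!
Stack the factors into the block row `A = [a₁ ⋯ a_N]` and the block column
`B = [b₁; ⋯; b_N]`, so that `∑ xₙ = AB`, `∑ aₙaₙ* = AA*` and `∑ bₙ*bₙ = B*B`. Cauchy–Schwarz for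
the trace inner product gives `‖AB‖₂² = tr(A*A · BB*) ≤ ‖A*A‖₂ ‖BB*‖₂ = ‖AA*‖₂ ‖B*B‖₂`.
For `aₙ = bₙ = xₙ^{1/2}` both sums on the right are `∑ xₙ`, so the bound is attained.
-/

open Matrix ComplexOrder

/-- The Frobenius (Hilbert–Schmidt) norm `‖x‖₂ = sqrt(trace(x* x))` of a complex matrix. -/
noncomputable def frob {m : ℕ} (x : Matrix (Fin m) (Fin m) ℂ) : ℝ :=
  Real.sqrt ((xᴴ * x).trace.re)

open scoped MatrixOrder

namespace Matrix

section HilbertSchmidt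

variable {𝕜 m n : Type*} [RCLike 𝕜] [Fintype m] [Fintype n]

theorem trace_conjTranspose_mul_eq_inner (P Q : Matrix m n 𝕜) :
    (Pᴴ * Q).trace =
      inner 𝕜 (WithLp.toLp 2 (Function.uncurry P)) (WithLp.toLp 2 (Function.uncurry Q)) := by
  simp only [trace, diag, mul_apply, conjTranspose_apply, PiLp.inner_apply, RCLike.inner_apply,
    Fintype.sum_prod_type, RCLike.star_def]
  rw [Finset.sum_comm]
  exact Finset.sum_congr rfl fun _ _ => Finset.sum_congr rfl fun _ _ => mul_comm _ _

theorem re_trace_conjTranspose_mul_le (P Q : Matrix m n 𝕜) :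
    RCLike.re (Pᴴ * Q).trace ≤
      √(RCLike.re (Pᴴ * P).trace) * √(RCLike.re (Qᴴ * Q).trace) := by
  simpa only [trace_conjTranspose_mul_eq_inner, norm_eq_sqrt_re_inner (𝕜 := 𝕜)]
    using re_inner_le_norm (𝕜 := 𝕜) (WithLp.toLp 2 (Function.uncurry P))
      (WithLp.toLp 2 (Function.uncurry Q))

end HilbertSchmidt

theorem trace_conjTranspose_mul_self_sq {R m n : Type*} [Fintype m] [Fintype n]
    [CommSemiring R] [StarRing R] (A : Matrix m n R) :
    ((Aᴴ * A)ᴴ * (Aᴴ * A)).trace = ((A * Aᴴ)ᴴ * (A * Aᴴ)).trace := by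
  simp only [conjTranspose_mul, conjTranspose_conjTranspose, Matrix.mul_assoc]
  rw [trace_mul_comm]
  simp only [Matrix.mul_assoc]

variable {α ι m n : Type*}

def hstack (a : ι → Matrix m n α) : Matrix m (ι × n) α :=
  of fun i p => a p.1 i p.2

def vstack (b : ι → Matrix m n α) : Matrix (ι × m) n α :=
  of fun p j => b p.1 p.2 j

theorem hstack_mul_vstack [Fintype ι] [Fintype m] [NonUnitalNonAssocSemiring α] {l : Type*}
    (a : ι → Matrix l m α) (b : ι → Matrix m n α) :
    hstack a * vstack b = ∑ i, a i * b i := by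
  ext
  simp [hstack, vstack, mul_apply, sum_apply, Fintype.sum_prod_type]

theorem conjTranspose_hstack [Star α] (a : ι → Matrix m n α) :
    (hstack a)ᴴ = vstack fun i => (a i)ᴴ := rfl

theorem conjTranspose_vstack [Star α] (b : ι → Matrix m n α) :
    (vstack b)ᴴ = hstack fun i => (b i)ᴴ := rfl

theorem conjTranspose_cfcSqrt [Fintype m] [DecidableEq m] (x : Matrix m m ℂ) :
    (CFC.sqrt x)ᴴ = CFC.sqrt x :=
  (CFC.sqrt_nonneg x).star_eq

end Matrix

theorem frob_mul_le {m : ℕ} {ι : Type*} [Fintype ι]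
    (A : Matrix (Fin m) ι ℂ) (B : Matrix ι (Fin m) ℂ) :
    frob (A * B) ≤ √(frob (A * Aᴴ)) * √(frob (Bᴴ * B)) := by
  have hAB : ((A * B)ᴴ * (A * B)).trace = ((Aᴴ * A)ᴴ * (B * Bᴴ)).trace := by
    simp only [conjTranspose_mul, conjTranspose_conjTranspose, Matrix.mul_assoc]
    rw [trace_mul_comm]
    simp only [Matrix.mul_assoc]
  have hsq : ((A * B)ᴴ * (A * B)).trace.re ≤ frob (A * Aᴴ) * frob (Bᴴ * B) := by
    have hBB := trace_conjTranspose_mul_self_sq Bᴴ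
    rw [conjTranspose_conjTranspose] at hBB
    rw [hAB, frob, frob, ← trace_conjTranspose_mul_self_sq, ← hBB]
    exact re_trace_conjTranspose_mul_le (Aᴴ * A) (B * Bᴴ)
  calc frob (A * B) ≤ √(frob (A * Aᴴ) * frob (Bᴴ * B)) := Real.sqrt_le_sqrt hsq
    _ = √(frob (A * Aᴴ)) * √(frob (Bᴴ * B)) := Real.sqrt_mul (Real.sqrt_nonneg _) _

theorem positive_sequence_ell1_norm {m N : ℕ}
    (x : Fin N → Matrix (Fin m) (Fin m) ℂ) (hx : ∀ n, (x n).PosSemidef) :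
    (∀ a b : Fin N → Matrix (Fin m) (Fin m) ℂ, (∀ n, x n = a n * b n) →
        frob (∑ n, x n) ≤
          Real.sqrt (frob (∑ n, a n * (a n)ᴴ)) * Real.sqrt (frob (∑ n, (b n)ᴴ * b n))) ∧
      ∃ a b : Fin N → Matrix (Fin m) (Fin m) ℂ, (∀ n, x n = a n * b n) ∧
        Real.sqrt (frob (∑ n, a n * (a n)ᴴ)) * Real.sqrt (frob (∑ n, (b n)ᴴ * b n)) =
          frob (∑ n, x n) := by
  have hsqrt (n : Fin N) : CFC.sqrt (x n) * CFC.sqrt (x n) = x n :=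
    CFC.sqrt_mul_sqrt_self (x n) (hx n).nonneg
  refine ⟨fun a b hab => ?_, fun n => CFC.sqrt (x n), fun n => CFC.sqrt (x n),
    fun n => (hsqrt n).symm, ?_⟩
  · have := frob_mul_le (hstack a) (vstack b)
    rwa [conjTranspose_hstack, conjTranspose_vstack, hstack_mul_vstack, hstack_mul_vstack,
      hstack_mul_vstack, ← funext hab] at this
  · simp only [conjTranspose_cfcSqrt, hsqrt]
    exact Real.mul_self_sqrt (Real.sqrt_nonneg _)
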